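/- Let N, k be positive integers with ⌊N/k⌋ > k. Then for every partition π of N with largest part at most k and every 1 ≤ j ≤ d(π), one has j − ∑_{i=1}^{j} rᵢ(π) ≤ 0. Consequently M′(N,k) = 0 whenever N ≥ k(k+1), i.e., the set P(N,k,l,s) equals P(N,k,l) already for all s ≥ 0 in this case. -/

import Mathlib

open Finset

/-- The degree sequence (as a multiset) of a simple graph on `Fin n`. -/
noncomputable def degSeq {n : ℕ} (G : SimpleGraph (Fin n)) : Multiset ℕ :=
  Finset.univ.val.map fun v => Nat.card {w // G.Adj v w}

/-- Number of graphical degree sequences of length `n`, allowing zero terms. -/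
noncomputable def numD0 (n : ℕ) : ℕ :=
  Set.ncard {M : Multiset ℕ | ∃ G : SimpleGraph (Fin n), degSeq G = M}

/-- Number of zero-free graphical degree sequences of length `n`. -/
noncomputable def numD (n : ℕ) : ℕ :=
  Set.ncard {M : Multiset ℕ | (∀ x ∈ M, 0 < x) ∧ ∃ G : SimpleGraph (Fin n), degSeq G = M}

/-- Number of zero-free graphical degree sequences of length `n` with largest part `< n-1`. -/
noncomputable def numL (n : ℕ) : ℕ :=
  Set.ncard {M : Multiset ℕ | (∀ x ∈ M, 0 < x ∧ x < n - 1) ∧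
    ∃ G : SimpleGraph (Fin n), degSeq G = M}

/-- Number of graphical partitions of `N` with exactly `n` parts and largest part `< n-1`. -/
noncomputable def numL' (N n : ℕ) : ℕ :=
  Set.ncard {M : Multiset ℕ | M.sum = N ∧ Multiset.card M = n ∧ (∀ x ∈ M, 0 < x ∧ x < n - 1) ∧
    ∃ G : SimpleGraph (Fin n), degSeq G = M}

/-- The `i`-th largest part (1-indexed) of the partition given by the multiset `M`. -/
def prt (M : Multiset ℕ) (i : ℕ) : ℕ := (M.sort (· ≤ ·)).reverse.getD (i - 1) 0

/-- The `i`-th part (1-indexed) of the conjugate partition of `M`. -/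
def conjPrt (M : Multiset ℕ) (i : ℕ) : ℕ := Multiset.card (M.filter fun x => i ≤ x)

/-- The side length of the Durfee square of `M`. -/
def durfee (M : Multiset ℕ) : ℕ :=
  ((Finset.Icc 1 (Multiset.card M)).filter fun i => i ≤ prt M i).card

/-- The `i`-th corank `rᵢ(π) = πᵢ' - πᵢ` of the partition `M`. -/
def corank (M : Multiset ℕ) (i : ℕ) : ℤ := (conjPrt M i : ℤ) - (prt M i : ℤ)

/-- The Barnes–Savage corank condition with parameter `s`. -/
def corankCond (M : Multiset ℕ) (s : ℤ) : Prop :=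
  ∀ j : ℕ, 1 ≤ j → j ≤ durfee M → (j : ℤ) ≤ s + ∑ i ∈ Finset.Icc 1 j, corank M i

/-- Partitions of `N` into at most `l` parts with each part at most `k`. -/
def PboxSet (N : ℤ) (k l : ℕ) : Set (Multiset ℕ) :=
  {M | (M.sum : ℤ) = N ∧ Multiset.card M ≤ l ∧ ∀ x ∈ M, 0 < x ∧ x ≤ k}

/-- `P(N,k,l)`: number of partitions of `N` into at most `l` parts with each part at most `k`. -/
noncomputable def Pcount (N : ℤ) (k l : ℕ) : ℕ := Set.ncard (PboxSet N k l)

/-- The Barnes–Savage set `P(N,k,l,s)`. -/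
def PBSset (N : ℤ) (k l : ℕ) (s : ℤ) : Set (Multiset ℕ) :=
  if s < 0 then ∅ else {M ∈ PboxSet N k l | corankCond M s}

/-- The Barnes–Savage function `P(N,k,l,s)`. -/
noncomputable def PBScount (N : ℤ) (k l : ℕ) (s : ℤ) : ℕ := Set.ncard (PBSset N k l s)

/-- Values `j - ∑_{i=1}^j rᵢ(π)` over partitions `π ∈ P(N,k,l)` and `1 ≤ j ≤ d(π)`. -/
def valSet (N k l : ℕ) : Set ℤ :=
  {v | ∃ M ∈ PboxSet (N : ℤ) k l, ∃ j : ℕ, 1 ≤ j ∧ j ≤ durfee M ∧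
    v = (j : ℤ) - ∑ i ∈ Finset.Icc 1 j, corank M i}

/-- Same values, over partitions of `N` with parts at most `k` (any number of parts). -/
def valSetU (N k : ℕ) : Set ℤ :=
  {v | ∃ M : Multiset ℕ, M.sum = N ∧ (∀ x ∈ M, 0 < x ∧ x ≤ k) ∧ ∃ j : ℕ, 1 ≤ j ∧
    j ≤ durfee M ∧ v = (j : ℤ) - ∑ i ∈ Finset.Icc 1 j, corank M i}

/-- Same values, over partitions of `N` into at most `l` parts (parts unbounded). -/
def valSetL (N l : ℕ) : Set ℤ :=
  {v | ∃ M : Multiset ℕ, M.sum = N ∧ Multiset.card M ≤ l ∧ (∀ x ∈ M, 0 < x) ∧ ∃ j : ℕ, 1 ≤ j ∧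
    j ≤ durfee M ∧ v = (j : ℤ) - ∑ i ∈ Finset.Icc 1 j, corank M i}

/-- The partition of `N` with as many parts equal to `k` as possible. -/
def maxPart (N k : ℕ) : Multiset ℕ :=
  Multiset.replicate (N / k) k + (if N % k = 0 then 0 else {N % k})

/-- The partition of `N` (at most `l` parts) whose conjugate has as many parts `= l` as possible. -/
def minPart (N l : ℕ) : Multiset ℕ :=
  (Multiset.replicate (N % l) (N / l + 1) + Multiset.replicate (l - N % l) (N / l)).filter (0 < ·)

/-- The function `M'(N,k)` of Algorithm 2. -/
def Mfun (N k : ℕ) : ℕ :=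
  if N = 0 ∨ k = 0 then 0
  else if k < N / k then 0
  else if N % k = 0 then (N / k) * (k - N / k + 1)
  else if N % k ≤ N / k then (N / k) * (k - N / k + 1) - N % k
  else (N / k) * (k - N / k - 1) + N % k


/- The key count: a part `p ≤ k` contributes `min p j` to `∑_{i ≤ j} π'_i`, and `j * p ≤ k * min p j`
when `j ≤ k`. Hence `k * ∑_{i ≤ j} π'_i ≥ j * N ≥ j * k * (k + 1)`, while `∑_{i ≤ j} π_i ≤ j * k`,
so the first `j` coranks sum to at least `j`. Since `j ≤ d(π) ≤ k`, this covers every admissible `j`. -/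

section Corank

variable {M : Multiset ℕ} {j k : ℕ}

lemma prt_le_of_forall_le (hM : ∀ x ∈ M, x ≤ k) (i : ℕ) : prt M i ≤ k := by
  unfold prt
  by_cases hi : i - 1 < (M.sort (· ≤ ·)).reverse.length
  · rw [List.getD_eq_getElem _ 0 hi]
    have hmem := List.getElem_mem hi
    rw [List.mem_reverse, Multiset.mem_sort] at hmem
    exact hM _ hmem
  · rw [List.getD_eq_default _ _ (not_lt.mp hi)]
    exact k.zero_le

lemma durfee_le_of_forall_le (hM : ∀ x ∈ M, x ≤ k) : durfee M ≤ k := by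
  have hsub : (Finset.Icc 1 (Multiset.card M)).filter (fun i => i ≤ prt M i) ⊆ Finset.Icc 1 k := by
    intro i hi
    obtain ⟨hi, hle⟩ := Finset.mem_filter.mp hi
    exact Finset.mem_Icc.mpr ⟨(Finset.mem_Icc.mp hi).1, hle.trans (prt_le_of_forall_le hM i)⟩
  calc durfee M ≤ (Finset.Icc 1 k).card := Finset.card_le_card hsub
    _ = k := by simp

lemma sum_Icc_prt_le (hM : ∀ x ∈ M, x ≤ k) (j : ℕ) : ∑ i ∈ Finset.Icc 1 j, prt M i ≤ j * k := by
  simpa using Finset.sum_le_card_nsmul (Finset.Icc 1 j) (prt M) k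
    fun i _ => prt_le_of_forall_le hM i

lemma sum_Icc_conjPrt (M : Multiset ℕ) (j : ℕ) :
    ∑ i ∈ Finset.Icc 1 j, conjPrt M i = (M.map (min · j)).sum := by
  induction M using Multiset.induction with
  | empty => simp [conjPrt]
  | cons p M ih =>
    have hcons : ∀ i, conjPrt (p ::ₘ M) i = (if i ≤ p then 1 else 0) + conjPrt M i := by
      intro i
      unfold conjPrt
      rw [Multiset.filter_cons]
      split_ifs <;> simp [add_comm]
    have hfilter : (Finset.Icc 1 j).filter (· ≤ p) = Finset.Icc 1 (min p j) := by
      ext i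
      simp only [Finset.mem_filter, Finset.mem_Icc, le_min_iff]
      omega
    simp only [hcons, Finset.sum_add_distrib, ih, Multiset.map_cons, Multiset.sum_cons,
      Finset.sum_boole, hfilter, Nat.card_Icc, Nat.add_sub_cancel, Nat.cast_id]

lemma mul_le_mul_min {p : ℕ} (hj : j ≤ k) (hp : p ≤ k) : j * p ≤ k * min p j := by
  rcases le_total p j with hpj | hjp
  · rw [min_eq_left hpj]
    exact Nat.mul_le_mul_right p hj
  · rw [min_eq_right hjp, mul_comm k]
    exact Nat.mul_le_mul_left j hp

lemma mul_sum_le_mul_sum_min (hj : j ≤ k) (hM : ∀ x ∈ M, x ≤ k) :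
    j * M.sum ≤ k * (M.map (min · j)).sum := by
  calc j * M.sum = (M.map (j * ·)).sum := by rw [Multiset.sum_map_mul_left, Multiset.map_id']
    _ ≤ (M.map (k * min · j)).sum :=
      Multiset.sum_map_le_sum_map _ _ fun p hp => mul_le_mul_min hj (hM p hp)
    _ = k * (M.map (min · j)).sum := Multiset.sum_map_mul_left

lemma mul_succ_le_sum_Icc_conjPrt (hM : ∀ x ∈ M, x ≤ k) (hN : k * (k + 1) ≤ M.sum) (hj : j ≤ k) :
    j * (k + 1) ≤ ∑ i ∈ Finset.Icc 1 j, conjPrt M i := by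
  rcases Nat.eq_zero_or_pos k with rfl | hk
  · simp [Nat.le_zero.mp hj]
  rw [sum_Icc_conjPrt]
  refine Nat.le_of_mul_le_mul_left ?_ hk
  calc k * (j * (k + 1)) = j * (k * (k + 1)) := by ring
    _ ≤ j * M.sum := Nat.mul_le_mul_left j hN
    _ ≤ k * (M.map (min · j)).sum := mul_sum_le_mul_sum_min hj hM

lemma le_sum_Icc_corank (hM : ∀ x ∈ M, x ≤ k) (hN : k * (k + 1) ≤ M.sum) (hj : j ≤ durfee M) :
    (j : ℤ) ≤ ∑ i ∈ Finset.Icc 1 j, corank M i := by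
  have hjk : j ≤ k := hj.trans (durfee_le_of_forall_le hM)
  have hconj := mul_succ_le_sum_Icc_conjPrt hM hN hjk
  have hprt := sum_Icc_prt_le hM j
  simp only [corank, Finset.sum_sub_distrib]
  zify at hconj hprt
  linarith

lemma corankCond_of_forall_le (hM : ∀ x ∈ M, x ≤ k) (hN : k * (k + 1) ≤ M.sum) {s : ℤ}
    (hs : 0 ≤ s) : corankCond M s := fun _ _ hj => by
  linarith [le_sum_Icc_corank hM hN hj]

end Corank

theorem stmt9_general (N k : ℕ) (h : k * (k + 1) ≤ N) :
    (∀ M : Multiset ℕ, M.sum = N → (∀ x ∈ M, 0 < x ∧ x ≤ k) →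
      ∀ j : ℕ, 1 ≤ j → j ≤ durfee M → (j : ℤ) - ∑ i ∈ Finset.Icc 1 j, corank M i ≤ 0) ∧
    (∀ l : ℕ, ∀ s : ℤ, 0 ≤ s → PBSset (N : ℤ) k l s = PboxSet (N : ℤ) k l) := by
  refine ⟨fun M hsum hM j _ hj => ?_, fun l s hs => ?_⟩
  · have := le_sum_Icc_corank (fun x hx => (hM x hx).2) (hsum ▸ h) hj
    linarith
  · rw [PBSset, if_neg (not_lt.mpr hs)]
    refine Set.sep_eq_self_iff_mem_true.mpr fun M ⟨hsum, _, hM⟩ => ?_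
    have hsum : M.sum = N := by exact_mod_cast hsum
    exact corankCond_of_forall_le (fun x hx => (hM x hx).2) (hsum ▸ h) hs

/-- If `⌊N/k⌋ > k` (equivalently `N ≥ k(k+1)`), then `j - ∑_{i≤j} rᵢ(π) ≤ 0` for every
partition `π` of `N` with parts at most `k`; consequently `P(N,k,l,s) = P(N,k,l)` for all
`s ≥ 0`. -/
theorem stmt9 (N k : ℕ) (hN : 1 ≤ N) (hk : 1 ≤ k) (h : k * (k + 1) ≤ N) :
    (∀ M : Multiset ℕ, M.sum = N → (∀ x ∈ M, 0 < x ∧ x ≤ k) →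
      ∀ j : ℕ, 1 ≤ j → j ≤ durfee M → (j : ℤ) - ∑ i ∈ Finset.Icc 1 j, corank M i ≤ 0) ∧
    (∀ l : ℕ, ∀ s : ℤ, 0 ≤ s → PBSset (N : ℤ) k l s = PboxSet (N : ℤ) k l) :=
  stmt9_general N k h
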